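/- Let m be a positive half-integer. Then for all τ in the upper half-plane and z1, z2, z3 ∈ ℂ such that none of z1, z2, z3, z1−z2−z3 lies in ℤ + ℤτ, the following identity holds: Σ_{j∈ℤ} q^{(m+1)j²} e^{−2πij(z1−z2)+2πijm(z1−z3)} Φ^{[m,0]}(τ, z1, −z3+2jτ, 0) − Σ_{j∈ℤ} q^{(m+1)j²} e^{2πij(z1−z2)+2πijm(z1−z3)} Φ^{[m,0]}(τ, z2, z1−z2−z3+2jτ, 0) = Σ_{j∈ℤ} q^{(m+1)j²} e^{2πij(z1−z2)−2πijm(z1−z3)} Φ^{[1,0]}(τ, z1, −z2+2jτ, 0) − Σ_{j∈ℤ} q^{(m+1)j²} e^{2πij(z1−z2)+2πijm(z1−z3)} Φ^{[1,0]}(τ, z3, z1−z2−z3+2jτ, 0). -/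

import Mathlib

/-!
Expanding every `Φ` into its defining series turns each side into a difference of double series
over `ℤ × ℤ` of Appell–Lerch terms `e(Q(j,k)τ + ju + kv) / (1 - e(w) q^(k + cj))`, where the
quadratic form `Q` (e.g. `(m+1)j² + mk² ± 2mjk`) is positive definite once `m > 0`; so all of these
series converge absolutely, and Fubini applies. The eight double series then match in pairs under
the unimodular substitutions `(j,k) ↦ (-(j+k), k)`, `(j,k) ↦ (-(j+k), -2j-k)` (and its inverse) and
`(j,k) ↦ (j-k, -k)`, which carry the quadratic form, the linear form and the denominator of each
term on the left to those of a term on the right.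
-/

open Complex

noncomputable section

namespace Wakimoto

/-- `qpow τ x = e^{2πiτx}`, i.e. `q^x` where `q = e^{2πiτ}`. -/
def qpow (τ x : ℂ) : ℂ := Complex.exp (2 * Real.pi * Complex.I * τ * x)

/-- `e2 z = e^{2πiz}`. -/
def e2 (z : ℂ) : ℂ := Complex.exp (2 * Real.pi * Complex.I * z)

/-- The mock theta function `Φ^{[m,s]}_1`. -/
def Phi1 (m s : ℂ) (τ z1 z2 t : ℂ) : ℂ :=
  Complex.exp (-(2 * Real.pi * Complex.I) * m * t) *
    ∑' j : ℤ,
      Complex.exp (2 * Real.pi * Complex.I * (m * (j : ℂ) * (z1 + z2) + s * z1)) *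
          qpow τ (m * (j : ℂ) ^ 2 + s * (j : ℂ)) /
        (1 - e2 z1 * qpow τ (j : ℂ))

/-- The mock theta function `Φ^{[m,s]}_2`. -/
def Phi2 (m s : ℂ) (τ z1 z2 t : ℂ) : ℂ :=
  Complex.exp (-(2 * Real.pi * Complex.I) * m * t) *
    ∑' j : ℤ,
      Complex.exp (-(2 * Real.pi * Complex.I) * (m * (j : ℂ) * (z1 + z2) + s * z2)) *
          qpow τ (m * (j : ℂ) ^ 2 + s * (j : ℂ)) /
        (1 - e2 (-z2) * qpow τ (j : ℂ))

/-- `Φ^{[m,s]} = Φ^{[m,s]}_1 - Φ^{[m,s]}_2`. -/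
def Phi (m s : ℂ) (τ z1 z2 t : ℂ) : ℂ :=
  Phi1 m s τ z1 z2 t - Phi2 m s τ z1 z2 t

/-- Jacobi's theta function `θ_{k,m}`. -/
def jTheta (k m : ℂ) (τ z : ℂ) : ℂ :=
  ∑' j : ℤ,
    Complex.exp (2 * Real.pi * Complex.I * (m * ((j : ℂ) + k / (2 * m)) * z)) *
      qpow τ (m * ((j : ℂ) + k / (2 * m)) ^ 2)

/-- The signed theta function `θ^{(-)}_{k,m}`. -/
def jThetaM (k m : ℂ) (τ z : ℂ) : ℂ :=
  ∑' j : ℤ,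
    (-1 : ℂ) ^ j *
      Complex.exp (2 * Real.pi * Complex.I * (m * ((j : ℂ) + k / (2 * m)) * z)) *
      qpow τ (m * ((j : ℂ) + k / (2 * m)) ^ 2)

/-- The Dedekind eta function. -/
def eta (τ : ℂ) : ℂ := qpow τ (1 / 24) * ∏' n : ℕ, (1 - qpow τ ((n : ℂ) + 1))

/-- The Mumford theta functions `ϑ_{ab}`. -/
def mumford (a b : ℕ) (τ z : ℂ) : ℂ :=
  ∑' n : ℤ,
    Complex.exp (Real.pi * Complex.I * τ * ((n : ℂ) + (a : ℂ) / 2) ^ 2 +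
      2 * Real.pi * Complex.I * ((n : ℂ) + (a : ℂ) / 2) * (z + (b : ℂ) / 2))

/-- `z` lies in the lattice `ℤ + ℤτ`. -/
def InLattice (τ z : ℂ) : Prop := ∃ a b : ℤ, z = (a : ℂ) + (b : ℂ) * τ

open Filter Topology

section

variable {τ : ℂ}

lemma e2_add (z w : ℂ) : e2 (z + w) = e2 z * e2 w := by
  simp only [e2, mul_add, Complex.exp_add]

lemma e2_mul_qpow (w x : ℂ) : e2 w * qpow τ x = e2 (w + x * τ) := by
  rw [e2_add, e2, e2, qpow]; ring_nf

lemma norm_e2 (z : ℂ) : ‖e2 z‖ = Real.exp (-(2 * Real.pi) * z.im) := by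
  rw [e2, Complex.norm_exp]; simp [Complex.mul_re]

lemma norm_e2_mul_qpow_intCast (w : ℂ) (n : ℤ) :
    ‖e2 w * qpow τ n‖ = Real.exp (-(2 * Real.pi) * w.im + -(2 * Real.pi * τ.im) * n) := by
  rw [e2_mul_qpow, norm_e2]; congr 1; simp; ring

lemma tendsto_e2_mul_qpow_atTop (hτ : 0 < τ.im) (w : ℂ) :
    Tendsto (fun n : ℤ => e2 w * qpow τ n) atTop (𝓝 0) := by
  rw [tendsto_zero_iff_norm_tendsto_zero]
  simp only [norm_e2_mul_qpow_intCast]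
  refine Real.tendsto_exp_atBot.comp (tendsto_atBot_add_const_left _ _ ?_)
  exact tendsto_intCast_atTop_atTop.const_mul_atTop_of_neg (neg_lt_zero.2 (by positivity))

lemma tendsto_norm_e2_mul_qpow_atBot (hτ : 0 < τ.im) (w : ℂ) :
    Tendsto (fun n : ℤ => ‖e2 w * qpow τ n‖) atBot atTop := by
  simp only [norm_e2_mul_qpow_intCast]
  refine Real.tendsto_exp_atTop.comp (tendsto_atTop_add_const_left _ _ ?_)
  exact (tendsto_intCast_atBot_iff.2 tendsto_id).const_mul_atBot_of_neg
    (neg_lt_zero.2 (by positivity))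

-- A vanishing denominator (`w ∈ ℤ + ℤτ`) contributes `‖0‖⁻¹ = 0`.
lemma bddAbove_range_inv_norm_one_sub_e2_mul_qpow (hτ : 0 < τ.im) (w : ℂ) :
    BddAbove (Set.range fun n : ℤ => ‖1 - e2 w * qpow τ n‖⁻¹) := by
  refine IsBoundedUnder.bddAbove_range_of_cofinite ?_
  rw [Int.cofinite_eq, IsBoundedUnder, map_sup]
  refine isBounded_sup ?_ ?_
  · have : Tendsto (fun n : ℤ => ‖1 - e2 w * qpow τ n‖) atBot atTop :=
      tendsto_atTop_mono (fun n => by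
        simpa [norm_sub_rev] using norm_sub_norm_le (e2 w * qpow τ n) 1)
        (tendsto_atTop_add_const_right _ (-1) (tendsto_norm_e2_mul_qpow_atBot hτ w))
    exact (tendsto_inv_atTop_zero.comp this).isBoundedUnder_le
  · have := ((tendsto_e2_mul_qpow_atTop hτ w).const_sub 1).norm.inv₀ (by simp)
    exact this.isBoundedUnder_le

def appellTerm (τ : ℂ) (a b d : ℝ) (u v w : ℂ) (c : ℤ) (p : ℤ × ℤ) : ℂ :=
  e2 ((a * p.1 ^ 2 + b * p.2 ^ 2 + d * p.1 * p.2) * τ + p.1 * u + p.2 * v) /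
    (1 - e2 w * qpow τ (p.2 + c * p.1 : ℤ))

lemma norm_e2_le_norm_jacobiTheta₂_term_mul (hτ : 0 < τ.im) {a b d ε : ℝ}
    (hQ : ∀ x y : ℝ, ε * (x ^ 2 + y ^ 2) ≤ a * x ^ 2 + b * y ^ 2 + d * x * y) (u v : ℂ) (j k : ℤ) :
    ‖e2 ((a * j ^ 2 + b * k ^ 2 + d * j * k) * τ + j * u + k * v)‖ ≤
      ‖jacobiTheta₂_term j u (2 * ε * τ)‖ * ‖jacobiTheta₂_term k v (2 * ε * τ)‖ := by
  rw [norm_e2, norm_jacobiTheta₂_term, norm_jacobiTheta₂_term, ← Real.exp_add]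
  refine Real.exp_le_exp.2 ?_
  have hQτ := mul_le_mul_of_nonneg_right (hQ j k) hτ.le
  have : ((a * j ^ 2 + b * k ^ 2 + d * j * k : ℝ) : ℂ) = a * j ^ 2 + b * k ^ 2 + d * j * k := by
    push_cast; ring
  have h2ετ : (2 * ε * τ : ℂ).im = 2 * ε * τ.im := by simp
  simp only [h2ετ, ← this, add_im, mul_im, ofReal_re, ofReal_im, intCast_re, intCast_im]
  nlinarith [Real.pi_pos]

lemma summable_appellTerm (hτ : 0 < τ.im) {a b d ε : ℝ} (hε : 0 < ε)
    (hQ : ∀ x y : ℝ, ε * (x ^ 2 + y ^ 2) ≤ a * x ^ 2 + b * y ^ 2 + d * x * y)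
    (u v w : ℂ) (c : ℤ) : Summable (appellTerm τ a b d u v w c) := by
  obtain ⟨K, hK⟩ := bddAbove_range_inv_norm_one_sub_e2_mul_qpow hτ w
  have hθ (z : ℂ) : Summable fun n : ℤ => ‖jacobiTheta₂_term n z (2 * ε * τ)‖ :=
    ((summable_jacobiTheta₂_term_iff z _).2 (by simpa using mul_pos (by positivity) hτ)).norm
  refine Summable.of_norm_bounded ((summable_mul_of_summable_norm (hθ u) (hθ v)).norm.mul_right K)
    fun p => ?_
  rw [appellTerm, norm_div, div_eq_mul_inv]
  exact mul_le_mul ((norm_e2_le_norm_jacobiTheta₂_term_mul hτ hQ u v p.1 p.2).trans_eq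
    (norm_mul _ _).symm) (hK ⟨_, rfl⟩) (by positivity) (norm_nonneg _)

lemma quadratic_form_coercive {A M : ℝ} (hM : 0 < M) (hMA : M < A) (x y : ℝ) :
    min (A - M) M / 3 * (x ^ 2 + y ^ 2) ≤ A * x ^ 2 + M * y ^ 2 + 2 * M * x * y := by
  have h₁ : min (A - M) M ≤ A - M := min_le_left _ _
  have h₂ : min (A - M) M ≤ M := min_le_right _ _
  have h₀ : 0 < min (A - M) M := lt_min (by linarith) hM
  nlinarith [sq_nonneg (x + y), sq_nonneg (2 * x + y), mul_le_mul_of_nonneg_right h₁ (sq_nonneg x),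
    mul_le_mul_of_nonneg_right h₂ (sq_nonneg (x + y))]

lemma hasSum_mul_tsum_of_summable {α β γ : Type*} [NormedDivisionRing α] [CompleteSpace α]
    {C : β → α} {g : β → γ → α} {F : β × γ → α} (hF : Summable F)
    (h : ∀ j k, C j * g j k = F (j, k)) :
    HasSum (fun j => C j * ∑' k, g j k) (∑' p, F p) :=
  hF.hasSum.prod_fiberwise fun j => by
    simpa only [← h, tsum_mul_left] using (hF.prod_factor j).hasSum

-- In `Φ₂` the shift `2jτ` of the second variable moves the pole of the `k`-th term to `k - 2j`.
lemma tsum_mul_Phi_eq (hτ : 0 < τ.im) {A M : ℝ} (hM : 0 < M) (hMA : M < A) (x Z W : ℂ)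
    {C : ℤ → ℂ} (hC : ∀ j : ℤ, C j = qpow τ (A * j ^ 2) * e2 (j * x)) :
    ∑' j : ℤ, C j * Phi M 0 τ Z (W + 2 * j * τ) 0 =
      ∑' p, appellTerm τ A M (2 * M) x (M * (Z + W)) Z 0 p -
        ∑' p, appellTerm τ A M (-(2 * M)) x (-(M * (Z + W))) (-W) (-2) p := by
  have hε : 0 < min (A - M) M / 3 := by have := lt_min (sub_pos.2 hMA) hM; positivity
  simp only [Phi, Phi1, Phi2, mul_zero, zero_mul, add_zero, Complex.exp_zero, one_mul,
    mul_sub]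
  refine ((hasSum_mul_tsum_of_summable
    (summable_appellTerm hτ hε (quadratic_form_coercive hM hMA) _ _ _ _) fun j k => ?_).sub
    (hasSum_mul_tsum_of_summable (summable_appellTerm hτ hε
      (fun x y => by simpa using quadratic_form_coercive hM hMA x (-y)) _ _ _ _)
      fun j k => ?_)).tsum_eq
  all_goals
    simp only [appellTerm, hC, e2, qpow, ← mul_div_assoc, ← Complex.exp_add]
    congr 3 <;> push_cast <;> ring

end

def shearEquiv : ℤ × ℤ ≃ ℤ × ℤ where
  toFun p := (-(p.1 + p.2), p.2)
  invFun p := (-(p.1 + p.2), p.2)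
  left_inv p := by simp
  right_inv p := by simp

def flipEquiv : ℤ × ℤ ≃ ℤ × ℤ where
  toFun p := (p.1 - p.2, -p.2)
  invFun p := (p.1 - p.2, -p.2)
  left_inv p := by simp
  right_inv p := by simp

def crossEquiv : ℤ × ℤ ≃ ℤ × ℤ where
  toFun p := (-(p.1 + p.2), -2 * p.1 - p.2)
  invFun p := (p.1 - p.2, p.2 - 2 * p.1)
  left_inv p := by ext <;> simp <;> ring
  right_inv p := by ext <;> simp <;> ring

lemma tsum_appellTerm_identity (τ : ℂ) (m : ℝ) (a b w₁ w₂ w₃ w₄ : ℂ) :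
    (∑' p, appellTerm τ (m + 1) m (2 * m) (m * b - a) (m * b) w₁ 0 p -
        ∑' p, appellTerm τ (m + 1) m (-(2 * m)) (m * b - a) (-(m * b)) w₃ (-2) p) -
      (∑' p, appellTerm τ (m + 1) m (2 * m) (m * b + a) (m * b) w₂ 0 p -
        ∑' p, appellTerm τ (m + 1) m (-(2 * m)) (m * b + a) (-(m * b)) w₄ (-2) p) =
    (∑' p, appellTerm τ (m + 1) 1 2 (a - m * b) a w₁ 0 p -
        ∑' p, appellTerm τ (m + 1) 1 (-2) (a - m * b) (-a) w₂ (-2) p) -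
      (∑' p, appellTerm τ (m + 1) 1 2 (a + m * b) a w₃ 0 p -
        ∑' p, appellTerm τ (m + 1) 1 (-2) (a + m * b) (-a) w₄ (-2) p) := by
  rw [sub_sub_sub_comm]
  congr 2 <;> [rw [← shearEquiv.tsum_eq]; rw [← crossEquiv.symm.tsum_eq];
    rw [← crossEquiv.tsum_eq]; rw [← flipEquiv.tsum_eq]]
  all_goals
    refine tsum_congr fun ⟨j, k⟩ => ?_
    simp only [appellTerm, shearEquiv, crossEquiv, flipEquiv, Equiv.coe_fn_mk, Equiv.coe_fn_symm_mk,
      e2_mul_qpow]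
    congr 2 <;> [skip; congr 1] <;> push_cast <;> ring

theorem statement10_general (m : ℝ) (hm : ∃ n : ℕ, 0 < n ∧ m = n / 2)
    (τ : ℂ) (hτ : 0 < τ.im) (z1 z2 z3 : ℂ) :
    (∑' j : ℤ, qpow τ (((m : ℂ) + 1) * (j : ℂ) ^ 2) *
        Complex.exp (2 * Real.pi * Complex.I *
          (-(j : ℂ) * (z1 - z2) + (j : ℂ) * (m : ℂ) * (z1 - z3))) *
        Phi (m : ℂ) 0 τ z1 (-z3 + 2 * (j : ℂ) * τ) 0) -
      (∑' j : ℤ, qpow τ (((m : ℂ) + 1) * (j : ℂ) ^ 2) *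
        Complex.exp (2 * Real.pi * Complex.I *
          ((j : ℂ) * (z1 - z2) + (j : ℂ) * (m : ℂ) * (z1 - z3))) *
        Phi (m : ℂ) 0 τ z2 (z1 - z2 - z3 + 2 * (j : ℂ) * τ) 0) =
    (∑' j : ℤ, qpow τ (((m : ℂ) + 1) * (j : ℂ) ^ 2) *
        Complex.exp (2 * Real.pi * Complex.I *
          ((j : ℂ) * (z1 - z2) - (j : ℂ) * (m : ℂ) * (z1 - z3))) *
        Phi 1 0 τ z1 (-z2 + 2 * (j : ℂ) * τ) 0) -
      (∑' j : ℤ, qpow τ (((m : ℂ) + 1) * (j : ℂ) ^ 2) *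
        Complex.exp (2 * Real.pi * Complex.I *
          ((j : ℂ) * (z1 - z2) + (j : ℂ) * (m : ℂ) * (z1 - z3))) *
        Phi 1 0 τ z3 (z1 - z2 - z3 + 2 * (j : ℂ) * τ) 0) := by
  have hm₀ : 0 < m := by
    obtain ⟨n, hn, rfl⟩ := hm
    positivity
  -- Rewrite `Phi 1` as `Phi ((1 : ℝ) : ℂ)` so that `tsum_mul_Phi_eq` applies to it.
  rw [← ofReal_one,
    tsum_mul_Phi_eq hτ hm₀ (lt_add_one _) (m * (z1 - z3) - (z1 - z2)),
    tsum_mul_Phi_eq hτ hm₀ (lt_add_one _) (m * (z1 - z3) + (z1 - z2)),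
    tsum_mul_Phi_eq hτ one_pos (lt_add_of_pos_left 1 hm₀) ((z1 - z2) - m * (z1 - z3)),
    tsum_mul_Phi_eq hτ one_pos (lt_add_of_pos_left 1 hm₀) ((z1 - z2) + m * (z1 - z3))]
  · convert tsum_appellTerm_identity τ m (z1 - z2) (z1 - z3) z1 z2 z3 (-(z1 - z2 - z3)) using 6 <;>
      push_cast <;> ring
  all_goals
    intro j
    simp only [e2]
    push_cast
    ring_nf

theorem statement10 (m : ℝ) (hm : ∃ n : ℕ, 0 < n ∧ m = n / 2)
    (τ : ℂ) (hτ : 0 < τ.im) (z1 z2 z3 : ℂ)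
    (h1 : ¬ InLattice τ z1) (h2 : ¬ InLattice τ z2) (h3 : ¬ InLattice τ z3)
    (h4 : ¬ InLattice τ (z1 - z2 - z3)) :
    (∑' j : ℤ, qpow τ (((m : ℂ) + 1) * (j : ℂ) ^ 2) *
        Complex.exp (2 * Real.pi * Complex.I *
          (-(j : ℂ) * (z1 - z2) + (j : ℂ) * (m : ℂ) * (z1 - z3))) *
        Phi (m : ℂ) 0 τ z1 (-z3 + 2 * (j : ℂ) * τ) 0) -
      (∑' j : ℤ, qpow τ (((m : ℂ) + 1) * (j : ℂ) ^ 2) *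
        Complex.exp (2 * Real.pi * Complex.I *
          ((j : ℂ) * (z1 - z2) + (j : ℂ) * (m : ℂ) * (z1 - z3))) *
        Phi (m : ℂ) 0 τ z2 (z1 - z2 - z3 + 2 * (j : ℂ) * τ) 0) =
    (∑' j : ℤ, qpow τ (((m : ℂ) + 1) * (j : ℂ) ^ 2) *
        Complex.exp (2 * Real.pi * Complex.I *
          ((j : ℂ) * (z1 - z2) - (j : ℂ) * (m : ℂ) * (z1 - z3))) *
        Phi 1 0 τ z1 (-z2 + 2 * (j : ℂ) * τ) 0) -
      (∑' j : ℤ, qpow τ (((m : ℂ) + 1) * (j : ℂ) ^ 2) *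
        Complex.exp (2 * Real.pi * Complex.I *
          ((j : ℂ) * (z1 - z2) + (j : ℂ) * (m : ℂ) * (z1 - z3))) *
        Phi 1 0 τ z3 (z1 - z2 - z3 + 2 * (j : ℂ) * τ) 0) :=
  statement10_general m hm τ hτ z1 z2 z3

end Wakimoto
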